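/- (Lemma 2.) Let F be a finite field with s elements, u ≥ 3 an integer, φ : F → {0,…,s−1} a fixed bijection, and for 1 ≤ i ≤ u let ξ_i : F^u → F be the i-th coordinate projection. Let A be the family of s+1 functions {ξ_1 + μξ_2 : μ ∈ F} ∪ {ξ_2}, and for 1 ≤ v ≤ u−2 let R_v be the family of s² functions {ξ_1 + μξ_2 + νξ_{v+2} : μ ∈ F, ν ∈ F∖{0}} ∪ {ξ_2 + νξ_{v+2} : ν ∈ F∖{0}} ∪ {ξ_{v+2}}. Choose one function h_v ∈ R_v for each v = 1,…,u−2, let (t_1,…,t_{u−2}) be any permutation of (1, s, s², …, s^{u−3}), and define b : F^u → {0,…,s^{u−2}−1} by b(x) = Σ_{w=1}^{u−2} t_w · φ(h_w(x)). Then: (a) for any two distinct functions g, g′ ∈ A, every triple in {0,…,s−1}×{0,…,s−1}×{0,…,s^{u−2}−1} occurs exactly once among the s^u triples (φ(g(x)), φ(g′(x)), b(x)), x ∈ F^u; and (b) b takes each value in {0,…,s^{u−2}−1} exactly s² times. -/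
import Mathlib

/-- Auxiliary: evaluation of a member of the family `A` as a function of the
first two coordinates. -/
def Aev {F : Type} [Field F] (o : Option F) (p q : F) : F :=
  match o with
  | some μ => p + μ * q
  | none => q

/-- Auxiliary: value of a member of a family `R_v` as a function of the data. -/
def Vval {F : Type} [Field F] (p q t : F) (co : Option (Option F × {y : F // y ≠ 0})) : F :=
  match co with
  | some (some μ, ν) => ν.1⁻¹ * (t - (p + μ * q))
  | some (none, ν) => ν.1⁻¹ * (t - q)
  | none => t

/-- Auxiliary: the explicit solution map used to invert the system of
equations defining `b`. -/
def Xdef {F : Type} [Field F] (u : ℕ) (c : ℕ → Option (Option F × {y : F // y ≠ 0}))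
    (p q : F) (z : ℕ → F) : Fin u → F := fun k =>
  match (k : ℕ) with
  | 0 => p
  | 1 => q
  | (n+2) => Vval p q (z n) (c (n+1))

lemma Xdef_zero {F : Type} [Field F] {u : ℕ} (c : ℕ → Option (Option F × {y : F // y ≠ 0}))
    (p q : F) (z : ℕ → F) (k : Fin u) (hk : (k : ℕ) = 0) :
    Xdef u c p q z k = p := by
  have h : Xdef u c p q z k = (match (k : ℕ) with
    | 0 => p
    | 1 => q
    | (n+2) => Vval p q (z n) (c (n+1))) := rfl
  rw [h, hk]

lemma Xdef_one {F : Type} [Field F] {u : ℕ} (c : ℕ → Option (Option F × {y : F // y ≠ 0}))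
    (p q : F) (z : ℕ → F) (k : Fin u) (hk : (k : ℕ) = 1) :
    Xdef u c p q z k = q := by
  have h : Xdef u c p q z k = (match (k : ℕ) with
    | 0 => p
    | 1 => q
    | (n+2) => Vval p q (z n) (c (n+1))) := rfl
  rw [h, hk]

/-- Lemma 2: with `b x = Σ_{w=1}^{u-2} t_w · φ(h_w x)` where `(t_1,…,t_{u-2})` is a
permutation of `(1, s, …, s^{u-3})` (encoded by an injective exponent map `σ`), (a) for
any two distinct members `g, g'` of `A`, every triple in
`{0,…,s-1}² × {0,…,s^{u-2}-1}` occurs exactly once among `(φ(g x), φ(g' x), b x)`;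
and (b) `b` takes each value in `{0,…,s^{u-2}-1}` exactly `s²` times. -/
theorem statement15 (F : Type) [Field F] [Fintype F] [DecidableEq F]
    (s u : ℕ) (hcard : Fintype.card F = s) (hu : 3 ≤ u)
    (phi : F → ℕ) (hphi1 : ∀ a : F, phi a < s) (hphi2 : Function.Injective phi)
    (A : Option F → (Fin u → F) → F)
    (hA1 : ∀ μ : F, A (some μ) = fun x => x ⟨0, by omega⟩ + μ * x ⟨1, by omega⟩)
    (hA2 : A none = fun x => x ⟨1, by omega⟩)
    (R : ℕ → Option (Option F × {y : F // y ≠ 0}) → (Fin u → F) → F)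
    (hR1 : ∀ (v : ℕ) (_ : 1 ≤ v) (_ : v ≤ u - 2) (μ : F) (ν : {y : F // y ≠ 0}),
      R v (some (some μ, ν)) =
        fun x => x ⟨0, by omega⟩ + μ * x ⟨1, by omega⟩ + ν.1 * x ⟨v + 1, by omega⟩)
    (hR2 : ∀ (v : ℕ) (_ : 1 ≤ v) (_ : v ≤ u - 2) (ν : {y : F // y ≠ 0}),
      R v (some (none, ν)) = fun x => x ⟨1, by omega⟩ + ν.1 * x ⟨v + 1, by omega⟩)
    (hR3 : ∀ (v : ℕ) (_ : 1 ≤ v) (_ : v ≤ u - 2),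
      R v none = fun x => x ⟨v + 1, by omega⟩)
    (c : ℕ → Option (Option F × {y : F // y ≠ 0}))
    (σ : ℕ → ℕ)
    (hσ1 : ∀ w, 1 ≤ w → w ≤ u - 2 → σ w ≤ u - 3)
    (hσ2 : ∀ w, 1 ≤ w → w ≤ u - 2 → ∀ w', 1 ≤ w' → w' ≤ u - 2 → σ w = σ w' → w = w')
    (b : (Fin u → F) → ℕ)
    (hb : ∀ x, b x = ∑ w ∈ Finset.Icc 1 (u - 2), s ^ σ w * phi (R w (c w) x)) :
    (∀ o o' : Option F, o ≠ o' → ∀ a < s, ∀ a' < s, ∀ v < s ^ (u - 2),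
      (Finset.univ.filter
        (fun x : Fin u → F =>
          phi (A o x) = a ∧ phi (A o' x) = a' ∧ b x = v)).card = 1) ∧
    (∀ v < s ^ (u - 2),
      (Finset.univ.filter (fun x : Fin u → F => b x = v)).card = s ^ 2) := by
  classical
  -- the bijection φ : F ≃ Fin s
  have hbij : Function.Bijective (fun a : F => (⟨phi a, hphi1 a⟩ : Fin s)) := by
    rw [Fintype.bijective_iff_injective_and_card]
    exact ⟨fun a b h => hphi2 (congrArg Fin.val h), by simp [hcard]⟩
  let φF : F ≃ Fin s := Equiv.ofBijective _ hbij
  have φF_apply : ∀ a : F, (φF a : ℕ) = phi a := fun a => rfl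
  have phi_symm : ∀ (a : ℕ) (ha : a < s), phi (φF.symm ⟨a, ha⟩) = a := by
    intro a ha
    have := φF.apply_symm_apply ⟨a, ha⟩
    have h2 := congrArg Fin.val this
    rw [φF_apply] at h2
    exact h2
  have phi_eq_iff : ∀ (t : F) (a : ℕ) (ha : a < s), (phi t = a ↔ t = φF.symm ⟨a, ha⟩) := by
    intro t a ha
    constructor
    · intro h
      have : φF t = ⟨a, ha⟩ := Fin.ext (by rw [φF_apply]; exact h)
      rw [← this, Equiv.symm_apply_apply]
    · intro h; rw [h]; exact phi_symm a ha
  -- the permutation given by σ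
  let σ' : Fin (u - 2) → Fin (u - 2) := fun i =>
    ⟨σ ((i : ℕ) + 1), by
      have h1 := hσ1 ((i : ℕ) + 1) (by omega) (by have := i.isLt; omega)
      omega⟩
  have hσ'inj : Function.Injective σ' := by
    intro i j h
    have := hσ2 ((i : ℕ) + 1) (by omega) (by have := i.isLt; omega)
      ((j : ℕ) + 1) (by omega) (by have := j.isLt; omega) (congrArg Fin.val h)
    exact Fin.ext (by omega)
  let e : Fin (u - 2) ≃ Fin (u - 2) :=
    Equiv.ofBijective σ' (Finite.injective_iff_bijective.mp hσ'inj)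
  let T : (Fin (u - 2) → F) ≃ Fin (s ^ (u - 2)) :=
    (Equiv.arrowCongr e φF).trans finFunctionFinEquiv
  have Tval : ∀ y : Fin (u - 2) → F,
      ((T y : Fin (s ^ (u - 2))) : ℕ) = ∑ i : Fin (u - 2), s ^ σ ((i : ℕ) + 1) * phi (y i) := by
    intro y
    have h0 : ((T y : Fin (s ^ (u - 2))) : ℕ)
        = ∑ j : Fin (u - 2), ((φF (y (e.symm j))) : ℕ) * s ^ (j : ℕ) := by
      rw [show T y = finFunctionFinEquiv ((Equiv.arrowCongr e φF) y) from rfl,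
        finFunctionFinEquiv_apply]
      rfl
    rw [h0, ← Equiv.sum_comp e (fun j : Fin (u - 2) => ((φF (y (e.symm j))) : ℕ) * s ^ (j : ℕ))]
    refine Finset.sum_congr rfl fun i _ => ?_
    rw [Equiv.symm_apply_apply]
    rw [show ((e i : Fin (u - 2)) : ℕ) = σ ((i : ℕ) + 1) from rfl]
    rw [mul_comm]
    rfl
  -- b in terms of T
  have hbT : ∀ x : Fin u → F,
      b x = ((T (fun i : Fin (u - 2) => R ((i : ℕ) + 1) (c ((i : ℕ) + 1)) x)
        : Fin (s ^ (u - 2))) : ℕ) := by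
    intro x
    rw [hb x, Tval]
    rw [show Finset.Icc 1 (u - 2) = Finset.Ico 1 (u - 2 + 1) from by rw [Finset.Ico_add_one_right_eq_Icc]]
    rw [Finset.sum_Ico_eq_sum_range]
    rw [show u - 2 + 1 - 1 = u - 2 from by omega]
    rw [← Fin.sum_univ_eq_sum_range (fun i => s ^ σ (1 + i) * phi (R (1 + i) (c (1 + i)) x))]
    refine Finset.sum_congr rfl fun i _ => by rw [Nat.add_comm 1 (i : ℕ)]
  have hbv : ∀ (x : Fin u → F) (v : ℕ) (hv : v < s ^ (u - 2)),
      (b x = v ↔ ∀ i : Fin (u - 2),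
        R ((i : ℕ) + 1) (c ((i : ℕ) + 1)) x = T.symm ⟨v, hv⟩ i) := by
    intro x v hv
    rw [hbT]
    constructor
    · intro h
      have h2 : T (fun i : Fin (u - 2) => R ((i : ℕ) + 1) (c ((i : ℕ) + 1)) x) = ⟨v, hv⟩ :=
        Fin.ext h
      have h3 : (fun i : Fin (u - 2) => R ((i : ℕ) + 1) (c ((i : ℕ) + 1)) x)
          = T.symm ⟨v, hv⟩ := by rw [← h2, Equiv.symm_apply_apply]
      exact fun i => congrFun h3 i
    · intro h
      have h3 : (fun i : Fin (u - 2) => R ((i : ℕ) + 1) (c ((i : ℕ) + 1)) x)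
          = T.symm ⟨v, hv⟩ := funext h
      rw [h3, Equiv.apply_symm_apply]
  -- the explicit solution
  let X : F → F → (Fin (u - 2) → F) → (Fin u → F) := fun p q z =>
    Xdef u c p q (fun n => if h : n < u - 2 then z ⟨n, h⟩ else 0)
  have hX0 : ∀ p q z, X p q z ⟨0, by omega⟩ = p := fun p q z => Xdef_zero _ _ _ _ _ rfl
  have hX1 : ∀ p q z, X p q z ⟨1, by omega⟩ = q := fun p q z => Xdef_one _ _ _ _ _ rfl
  -- X solves the system
  have hXm : ∀ (p q : F) (z : Fin (u - 2) → F) (i : Fin (u - 2)),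
      X p q z ⟨(i : ℕ) + 1 + 1, by have := i.isLt; omega⟩
        = Vval p q (z i) (c ((i : ℕ) + 1)) := by
    intro p q z i
    have hi := i.isLt
    show Vval p q (if h : (i : ℕ) < u - 2 then z ⟨(i : ℕ), h⟩ else 0) (c ((i : ℕ) + 1))
        = Vval p q (z i) (c ((i : ℕ) + 1))
    rw [dif_pos hi]
  have hXR : ∀ (p q : F) (z : Fin (u - 2) → F) (i : Fin (u - 2)),
      R ((i : ℕ) + 1) (c ((i : ℕ) + 1)) (X p q z) = z i := by
    intro p q z i
    have hi := i.isLt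
    have hw1 : 1 ≤ (i : ℕ) + 1 := by omega
    have hw2 : (i : ℕ) + 1 ≤ u - 2 := by omega
    have hXk := hXm p q z i
    cases hc : c ((i : ℕ) + 1) with
    | none =>
      rw [hR3 ((i : ℕ) + 1) hw1 hw2]
      rw [hc] at hXk
      exact hXk
    | some pr =>
      obtain ⟨mo, ν⟩ := pr
      cases mo with
      | none =>
        rw [hR2 ((i : ℕ) + 1) hw1 hw2 ν]
        rw [hc] at hXk
        show X p q z ⟨1, by omega⟩ + ν.1 * X p q z ⟨(i : ℕ) + 1 + 1, by have := i.isLt; omega⟩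
            = z i
        rw [hX1, hXk]
        show q + ν.1 * (ν.1⁻¹ * (z i - q)) = z i
        rw [mul_inv_cancel_left₀ ν.2]
        ring
      | some μ =>
        rw [hR1 ((i : ℕ) + 1) hw1 hw2 μ ν]
        rw [hc] at hXk
        show X p q z ⟨0, by omega⟩ + μ * X p q z ⟨1, by omega⟩
            + ν.1 * X p q z ⟨(i : ℕ) + 1 + 1, by have := i.isLt; omega⟩ = z i
        rw [hX0, hX1, hXk]
        show p + μ * q + ν.1 * (ν.1⁻¹ * (z i - (p + μ * q))) = z i
        rw [mul_inv_cancel_left₀ ν.2]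
        ring
  -- uniqueness
  have huniq : ∀ x x' : Fin u → F,
      x ⟨0, by omega⟩ = x' ⟨0, by omega⟩ → x ⟨1, by omega⟩ = x' ⟨1, by omega⟩ →
      (∀ i : Fin (u - 2),
        R ((i : ℕ) + 1) (c ((i : ℕ) + 1)) x = R ((i : ℕ) + 1) (c ((i : ℕ) + 1)) x') →
      x = x' := by
    intro x x' h0 h1 hY
    funext k
    rcases lt_or_ge (k : ℕ) 2 with hk | hk
    · rcases (by omega : (k : ℕ) = 0 ∨ (k : ℕ) = 1) with hk0 | hk1
      · have : k = (⟨0, by omega⟩ : Fin u) := Fin.ext hk0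
        rw [this]; exact h0
      · have : k = (⟨1, by omega⟩ : Fin u) := Fin.ext hk1
        rw [this]; exact h1
    · have hku := k.isLt
      set i : Fin (u - 2) := ⟨(k : ℕ) - 2, by omega⟩ with hidef
      have hiv : (i : ℕ) = (k : ℕ) - 2 := rfl
      have hw1 : 1 ≤ (i : ℕ) + 1 := by omega
      have hw2 : (i : ℕ) + 1 ≤ u - 2 := by omega
      have hik : (⟨(i : ℕ) + 1 + 1, by omega⟩ : Fin u) = k :=
        Fin.ext (show (i : ℕ) + 1 + 1 = (k : ℕ) by omega)
      have hY' := hY i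
      cases hc : c ((i : ℕ) + 1) with
      | none =>
        rw [hc, hR3 ((i : ℕ) + 1) hw1 hw2] at hY'
        simpa [hik] using hY'
      | some pr =>
        obtain ⟨mo, ν⟩ := pr
        cases mo with
        | none =>
          rw [hc, hR2 ((i : ℕ) + 1) hw1 hw2 ν] at hY'
          simp only [hik] at hY'
          rw [h1] at hY'
          exact mul_left_cancel₀ ν.2 (add_left_cancel hY')
        | some μ =>
          rw [hc, hR1 ((i : ℕ) + 1) hw1 hw2 μ ν] at hY'
          simp only [hik] at hY'
          rw [h0, h1] at hY'
          exact mul_left_cancel₀ ν.2 (add_left_cancel hY')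
  -- A evaluation
  have hAev : ∀ (o : Option F) (x : Fin u → F),
      A o x = Aev o (x ⟨0, by omega⟩) (x ⟨1, by omega⟩) := by
    intro o x
    cases o with
    | none => rw [hA2]; rfl
    | some μ => rw [hA1]; rfl
  -- existence of (p, q)
  have pqE : ∀ (o o' : Option F), o ≠ o' → ∀ α β : F,
      ∃ p q : F, Aev o p q = α ∧ Aev o' p q = β := by
    intro o o' h α β
    match o, o' with
    | none, none => exact absurd rfl h
    | some μ, none =>
      exact ⟨α - μ * β, β, by simp [Aev], rfl⟩
    | none, some μ =>
      exact ⟨β - μ * α, α, rfl, by simp [Aev]⟩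
    | some μ, some μ' =>
      have hμ : μ - μ' ≠ 0 := sub_ne_zero.mpr (fun hh => h (by rw [hh]))
      refine ⟨α - μ * ((α - β) / (μ - μ')), (α - β) / (μ - μ'), by simp [Aev], ?_⟩
      show α - μ * ((α - β) / (μ - μ')) + μ' * ((α - β) / (μ - μ')) = β
      field_simp
      ring
  -- uniqueness of (p, q)
  have pqU : ∀ (o o' : Option F), o ≠ o' → ∀ p q p' q' : F,
      Aev o p q = Aev o p' q' → Aev o' p q = Aev o' p' q' → p = p' ∧ q = q' := by
    intro o o' h p q p' q' h1 h2
    match o, o' with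
    | none, none => exact absurd rfl h
    | some μ, none =>
      simp only [Aev] at h1 h2
      rw [h2] at h1
      exact ⟨add_right_cancel h1, h2⟩
    | none, some μ =>
      simp only [Aev] at h1 h2
      rw [h1] at h2
      exact ⟨add_right_cancel h2, h1⟩
    | some μ, some μ' =>
      have hμ : μ ≠ μ' := fun hh => h (by rw [hh])
      simp only [Aev] at h1 h2
      have hq : q = q' := by
        have h3 : (μ - μ') * q = (μ - μ') * q' := by linear_combination h1 - h2
        exact mul_left_cancel₀ (sub_ne_zero.mpr hμ) h3
      have hp : p = p' := by rw [hq] at h1; exact add_right_cancel h1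
      exact ⟨hp, hq⟩
  constructor
  · -- part (a)
    intro o o' hoo a ha a' ha' v hv
    obtain ⟨p, q, hp1, hp2⟩ := pqE o o' hoo (φF.symm ⟨a, ha⟩) (φF.symm ⟨a', ha'⟩)
    set z : Fin (u - 2) → F := T.symm ⟨v, hv⟩ with hzdef
    have key : ∀ x : Fin u → F,
        (phi (A o x) = a ∧ phi (A o' x) = a' ∧ b x = v) ↔ x = X p q z := by
      intro x
      constructor
      · rintro ⟨k1, k2, k3⟩
        rw [hAev, phi_eq_iff _ a ha] at k1
        rw [hAev, phi_eq_iff _ a' ha'] at k2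
        have hpq := pqU o o' hoo (x ⟨0, by omega⟩) (x ⟨1, by omega⟩) p q
          (by rw [k1, hp1]) (by rw [k2, hp2])
        refine huniq x (X p q z) ?_ ?_ ?_
        · rw [hpq.1, hX0]
        · rw [hpq.2, hX1]
        · intro i
          rw [hXR p q z i]
          exact (hbv x v hv).mp k3 i
      · rintro rfl
        refine ⟨?_, ?_, ?_⟩
        · rw [hAev, hX0, hX1, hp1, phi_symm]
        · rw [hAev, hX0, hX1, hp2, phi_symm]
        · exact (hbv _ v hv).mpr (fun i => hXR p q z i)
    have : Finset.univ.filter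
        (fun x : Fin u → F => phi (A o x) = a ∧ phi (A o' x) = a' ∧ b x = v)
        = {X p q z} := by
      ext x
      simp only [Finset.mem_filter, Finset.mem_univ, true_and, Finset.mem_singleton]
      exact key x
    rw [this, Finset.card_singleton]
  · -- part (b)
    intro v hv
    set z : Fin (u - 2) → F := T.symm ⟨v, hv⟩ with hzdef
    have hmem : ∀ (p q : F), X p q z ∈ Finset.univ.filter (fun x : Fin u → F => b x = v) := by
      intro p q
      simp only [Finset.mem_filter, Finset.mem_univ, true_and]
      exact (hbv _ v hv).mpr (fun i => hXR p q z i)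
    have hcount : (Finset.univ.filter (fun x : Fin u → F => b x = v)).card
        = (Finset.univ : Finset (F × F)).card := by
      refine Finset.card_bij' (fun x _ => (x ⟨0, by omega⟩, x ⟨1, by omega⟩))
        (fun pq _ => X pq.1 pq.2 z) (fun x hx => Finset.mem_univ _)
        (fun pq _ => hmem pq.1 pq.2) ?_ ?_
      · intro x hx
        simp only [Finset.mem_filter, Finset.mem_univ, true_and] at hx
        refine (huniq (X (x ⟨0, by omega⟩) (x ⟨1, by omega⟩) z) x ?_ ?_ ?_)
        · rw [hX0]
        · rw [hX1]
        · intro i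
          rw [hXR]
          exact ((hbv x v hv).mp hx i).symm
      · intro pq _
        show (X pq.1 pq.2 z ⟨0, by omega⟩, X pq.1 pq.2 z ⟨1, by omega⟩) = pq
        rw [hX0, hX1]
    rw [hcount]
    simp [hcard, sq]
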